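/- Let f : R^d -> R^K agree with the affine map g(z) = Vz + a on a set Q whose interior contains x, with f_c(x) > f_s(x) for all s != c. Let d_B(x) denote the l_p-distance from x to the complement of Q. If d_B(x) <= d_D(x) := min_{s != c} |<V_c - V_s,x> + a_c - a_s| / ||V_c - V_s||_q, then for every delta with ||delta||_p < d_B(x), the point x + delta is also classified as class c, i.e. f_c(x+delta) > f_s(x+delta) for all s != c. -/

import Mathlib

/-!
On `Q` the decision margin `f_c - f_s` is the affine function `⟨V_c - V_s, ·⟩ + a_c - a_s`,
which is positive at `x`. Every `x + δ` with `‖δ‖_p < d_B(x)` still lies in `Q`, and by Hölder's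
inequality the margin moves by at most `‖V_c - V_s‖_q ‖δ‖_p`, which is less than the margin at `x`
because `‖δ‖_p < d_B(x) ≤ d_D(x)`.
-/

open scoped BigOperators ENNReal

noncomputable def pnorm (p : ℝ≥0∞) {d : ℕ} (x : Fin d → ℝ) : ℝ :=
  ‖(WithLp.equiv p (Fin d → ℝ)).symm x‖

noncomputable def dotp {d : ℕ} (w x : Fin d → ℝ) : ℝ := ∑ i, w i * x i

section

variable {d : ℕ}

lemma dotp_sub_left (u v x : Fin d → ℝ) : dotp (u - v) x = dotp u x - dotp v x :=
  sub_dotProduct u v x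

lemma dotp_add_right (w x y : Fin d → ℝ) : dotp w (x + y) = dotp w x + dotp w y :=
  dotProduct_add w x y

lemma pnorm_eq_norm_lp (p : ℝ≥0∞) [Fact (1 ≤ p)] (x : Fin d → ℝ) :
    pnorm p x = ‖(lpPiLpₗᵢ (fun _ : Fin d ↦ ℝ) ℝ).symm (WithLp.toLp p x)‖ :=
  ((lpPiLpₗᵢ _ ℝ).symm.norm_map _).symm

variable {p : ℝ≥0∞} [Fact (1 ≤ p)]

lemma pnorm_nonneg (x : Fin d → ℝ) : 0 ≤ pnorm p x := norm_nonneg _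

lemma pnorm_zero : pnorm p (0 : Fin d → ℝ) = 0 := norm_zero

lemma pnorm_neg (x : Fin d → ℝ) : pnorm p (-x) = pnorm p x := norm_neg _

lemma mem_of_pnorm_sub_lt_sInf {Q : Set (Fin d → ℝ)} {x y : Fin d → ℝ}
    (h : pnorm p (x - y) < sInf {r : ℝ | ∃ z ∈ Qᶜ, r = pnorm p (x - z)}) : y ∈ Q := by
  by_contra hy
  refine h.not_ge (csInf_le ⟨0, ?_⟩ ⟨y, hy, rfl⟩)
  rintro _ ⟨z, -, rfl⟩
  exact pnorm_nonneg _

end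

section

variable {p q : ℝ≥0∞} [p.HolderConjugate q] {d : ℕ}

-- Hölder's inequality, read off from the boundedness of the `ℓ^q × ℓ^p` duality pairing.
lemma abs_dotp_le_pnorm_mul_pnorm (w v : Fin d → ℝ) : |dotp w v| ≤ pnorm q w * pnorm p v := by
  have : Fact (1 ≤ p) := ⟨ENNReal.HolderConjugate.one_le p q⟩
  have : Fact (1 ≤ q) := ⟨ENNReal.HolderConjugate.one_le q p⟩
  have hmul : ∀ _ : Fin d, ‖ContinuousLinearMap.mul ℝ ℝ‖ ≤ ((1 : NNReal) : ℝ) := fun _ ↦ by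
    simp
  calc |dotp w v|
      = ‖lp.dualPairing q p _ hmul ((lpPiLpₗᵢ _ ℝ).symm (WithLp.toLp q w))
          ((lpPiLpₗᵢ _ ℝ).symm (WithLp.toLp p v))‖ := by
        simp [lp.dualPairing_apply, tsum_fintype, dotp, coe_lpPiLpₗᵢ_symm]
    _ ≤ 1 * pnorm q w * pnorm p v := by
        rw [pnorm_eq_norm_lp q, pnorm_eq_norm_lp p]
        exact (ContinuousLinearMap.le_opNorm₂ _ _ _).trans
          (by gcongr; exact lp.norm_dualPairing _ hmul)
    _ = pnorm q w * pnorm p v := by rw [one_mul]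

-- `|dotp w x + b| / ‖w‖_q` is the `l_p`-distance from `x` to the hyperplane `dotp w · + b = 0`.
lemma dotp_add_pos_of_pnorm_lt {w x δ : Fin d → ℝ} {b : ℝ}
    (hpos : 0 < dotp w x + b) (hδ : pnorm p δ < |dotp w x + b| / pnorm q w) :
    0 < dotp w (x + δ) + b := by
  have : Fact (1 ≤ p) := ⟨ENNReal.HolderConjugate.one_le p q⟩
  have : Fact (1 ≤ q) := ⟨ENNReal.HolderConjugate.one_le q p⟩
  have hw : 0 < pnorm q w := by
    refine (pnorm_nonneg w).lt_of_ne fun hw ↦ ?_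
    rw [← hw, div_zero] at hδ
    exact hδ.not_ge (pnorm_nonneg δ)
  have hprod : pnorm q w * pnorm p δ < dotp w x + b := by
    rwa [abs_of_pos hpos, lt_div_iff₀ hw, mul_comm] at hδ
  have hholder := abs_dotp_le_pnorm_mul_pnorm (p := p) (q := q) w δ
  rw [dotp_add_right]
  linarith [neg_abs_le (dotp w δ)]

end

theorem stmt5_general {d K : ℕ} (p q : ℝ≥0∞) (hpq : 1/p + 1/q = 1)
    (f : (Fin d → ℝ) → Fin K → ℝ)
    (Q : Set (Fin d → ℝ)) (V : Fin K → Fin d → ℝ) (a : Fin K → ℝ)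
    (hfQ : ∀ z ∈ Q, ∀ r : Fin K, f z r = dotp (V r) z + a r)
    (x : Fin d → ℝ) (c : Fin K)
    (hc : ∀ s : Fin K, s ≠ c → f x s < f x c)
    (dB dD : ℝ)
    (hdB : dB = sInf {r : ℝ | ∃ z ∈ Qᶜ, r = pnorm p (x - z)})
    (hdD : dD = sInf {r : ℝ | ∃ s : Fin K, s ≠ c ∧
        r = |dotp (V c - V s) x + (a c - a s)| / pnorm q (V c - V s)})
    (hBD : dB ≤ dD) :
    ∀ δ : Fin d → ℝ, pnorm p δ < dB →
      ∀ s : Fin K, s ≠ c → f (x + δ) s < f (x + δ) c := by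
  have hconj : p.HolderConjugate q := ENNReal.holderConjugate_iff.mpr (by simpa [one_div] using hpq)
  have : Fact (1 ≤ p) := ⟨hconj.one_le⟩
  have : Fact (1 ≤ q) := ⟨hconj.symm.one_le⟩
  intro δ hδ s hs
  have hQ : ∀ y, pnorm p (x - y) < dB → y ∈ Q := fun y hy ↦ mem_of_pnorm_sub_lt_sInf (hdB ▸ hy)
  have hx : x ∈ Q := hQ x (by rw [sub_self, pnorm_zero]; exact (pnorm_nonneg δ).trans_lt hδ)
  have hxδ : x + δ ∈ Q := hQ _ (by rwa [sub_add_cancel_left, pnorm_neg])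
  have hmargin : ∀ z ∈ Q, f z s < f z c ↔ 0 < dotp (V c - V s) z + (a c - a s) := fun z hz ↦ by
    rw [hfQ z hz, hfQ z hz, dotp_sub_left]
    constructor <;> intro h <;> linarith
  have hdD_le : dD ≤ |dotp (V c - V s) x + (a c - a s)| / pnorm q (V c - V s) := by
    refine hdD ▸ csInf_le ⟨0, ?_⟩ ⟨s, hs, rfl⟩
    rintro _ ⟨t, -, rfl⟩
    exact div_nonneg (abs_nonneg _) (pnorm_nonneg _)
  exact (hmargin _ hxδ).mpr <|
    dotp_add_pos_of_pnorm_lt ((hmargin x hx).mp (hc s hs)) (hδ.trans_le (hBD.trans hdD_le))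

/-- If d_B(x) ≤ d_D(x), every perturbation of l_p-norm < d_B(x) keeps the decision. -/
theorem stmt5 {d K : ℕ} (p q : ℝ≥0∞) (hp : 1 ≤ p) (hpq : 1/p + 1/q = 1)
    (f : (Fin d → ℝ) → Fin K → ℝ)
    (Q : Set (Fin d → ℝ)) (V : Fin K → Fin d → ℝ) (a : Fin K → ℝ)
    (hfQ : ∀ z ∈ Q, ∀ r : Fin K, f z r = dotp (V r) z + a r)
    (x : Fin d → ℝ) (hxQ : x ∈ interior Q) (c : Fin K)
    (hc : ∀ s : Fin K, s ≠ c → f x s < f x c)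
    (hV : ∀ s : Fin K, s ≠ c → V c ≠ V s)
    (dB dD : ℝ)
    (hdB : dB = sInf {r : ℝ | ∃ z ∈ Qᶜ, r = pnorm p (x - z)})
    (hdD : dD = sInf {r : ℝ | ∃ s : Fin K, s ≠ c ∧
        r = |dotp (V c - V s) x + (a c - a s)| / pnorm q (V c - V s)})
    (hBD : dB ≤ dD) :
    ∀ δ : Fin d → ℝ, pnorm p δ < dB →
      ∀ s : Fin K, s ≠ c → f (x + δ) s < f (x + δ) c :=
  stmt5_general p q hpq f Q V a hfQ x c hc dB dD hdB hdD hBD
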